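/- arXiv:2505.15432 — 3 statements merged into one kernel-verified Lean document; each statement's English description precedes it below -/
import Mathlib

section
/- Let ℓ = ℓ1 ℓ2 be a factorization of a Lyndon word ℓ with ℓ1 and ℓ2 both Lyndon, and suppose ℓ2 is not equal to the longest proper Lyndon suffix ℓ^r of ℓ. Then, writing the costandard factorization ℓ1 = u v (so u = ℓ1^l and v = ℓ1^r), the word u ℓ2 is Lyndon, and both rearrangements u ℓ2 v and v u ℓ2 are lexicographically greater than ℓ. -/
/- Words over a linearly ordered alphabet `I` are lists, compared by the
lexicographic order of Lean's `LinearOrder (List I)` instance, in which a word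
is smaller than any word of which it is a proper prefix. -/

variable {I : Type*} [LinearOrder I]

/-- A nonempty word is *Lyndon* if it is lexicographically smaller than
every proper nonempty suffix of itself. -/
def IsLyndon (w : List I) : Prop :=
  w ≠ [] ∧ ∀ i, 0 < i → i < w.length → w < w.drop i

/-- `r` is the longest proper suffix of `l` that is Lyndon
(the right factor `l^r` of the costandard factorization). -/
def LongestLyndonSuffix (l r : List I) : Prop :=
  r <:+ l ∧ r.length < l.length ∧ IsLyndon r ∧
    ∀ r', r' <:+ l → r'.length < l.length → IsLyndon r' → r'.length ≤ r.length

/-- `p` is the longest proper prefix of `l` that is Lyndon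
(the left factor `l^{ls}` of the standard factorization). -/
def LongestLyndonPrefix (l p : List I) : Prop :=
  p <+: l ∧ p.length < l.length ∧ IsLyndon p ∧
    ∀ p', p' <+: l → p'.length < l.length → IsLyndon p' → p'.length ≤ p.length

/-- `fs` is the canonical factorization of `w`: a nonempty, lexicographically
nonincreasing list of Lyndon words whose concatenation is `w`. -/
def IsCanonicalFactorization (w : List I) (fs : List (List I)) : Prop :=
  w = fs.flatten ∧ fs ≠ [] ∧ (∀ f ∈ fs, IsLyndon f) ∧ fs.Chain' (· ≥ ·)

/-!
The heart of the matter is `v < ℓ2`. As `ℓ2 ≠ ℓ^r`, the Lyndon suffix `ℓ^r` is strictly longer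
than `ℓ2`, so `ℓ^r = s ℓ2` for a nonempty proper suffix `s` of `ℓ1`. The longest proper Lyndon
suffix of a word is also its least proper suffix, so `s < s ℓ2 = ℓ^r ≤ ℓ2`, and `ℓ2 ≤ v ≤ s`
would be absurd.

Then `u < ℓ1 < v < ℓ2`, where `u = ℓ1^l` is Lyndon, so `u ℓ2` is Lyndon as a product of Lyndon
words in increasing order. For Lyndon `v < ℓ2` one has `v ℓ2 < ℓ2 v`, which is `ℓ < u ℓ2 v`;
finally `ℓ1 < v` with `|v| < |ℓ1|` forces `ℓ1 ℓ2 < v u ℓ2`.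
-/

namespace List

variable {α : Type*}

theorem append_lt_append_of_not_prefix [LT α] {x y : List α} (h : x < y)
    (hp : ¬x <+: y) (s t : List α) : x ++ s < y ++ t := by
  induction h with
  | nil => exact absurd nil_prefix hp
  | rel hab => exact Lex.rel hab
  | cons _ ih => exact Lex.cons (ih fun hxy => hp (cons_prefix_cons.mpr ⟨rfl, hxy⟩))

theorem append_lt_append_of_length_le [Preorder α] {x y : List α} (h : x < y)
    (hl : y.length ≤ x.length) (s t : List α) : x ++ s < y ++ t :=
  append_lt_append_of_not_prefix h (fun hp => List.lt_irrefl y (hp.eq_of_length_le hl ▸ h)) s t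

theorem lt_append_of_ne_nil [LT α] (x : List α) {t : List α} (ht : t ≠ []) :
    x < x ++ t := by
  obtain ⟨a, t, rfl⟩ := exists_cons_of_ne_nil ht
  simpa using append_left_lt (l₁ := x) (nil_lt_cons a t)

end List

open List

theorem IsLyndon.lt_of_suffix {w s : List I} (hw : IsLyndon w) (hs : s <:+ w) (hne : s ≠ [])
    (hlen : s.length < w.length) : w < s := by
  have hpos : 0 < s.length := length_pos_iff.mpr hne
  simpa [← suffix_iff_eq_drop.mp hs] using hw.2 (w.length - s.length) (by omega) (by omega)

theorem IsLyndon.le_of_suffix {w s : List I} (hw : IsLyndon w) (hs : s <:+ w) (hne : s ≠ []) :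
    w ≤ s := by
  rcases hs.length_le.lt_or_eq with hlen | hlen
  · exact (hw.lt_of_suffix hs hne hlen).le
  · exact (hs.eq_of_length hlen).ge

theorem IsLyndon.append_lt_right {a b : List I} (ha : IsLyndon a) (hb : IsLyndon b) (hab : a < b) :
    a ++ b < b := by
  by_cases hp : a <+: b
  · obtain ⟨c, rfl⟩ := hp
    have hc : c ≠ [] := by
      rintro rfl
      simp at hab
    have hapos : 0 < a.length := length_pos_iff.mpr ha.1
    exact append_left_lt (hb.lt_of_suffix (suffix_append a c) hc (by simp; omega))
  · simpa using append_lt_append_of_not_prefix hab hp b []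

theorem IsLyndon.append {a b : List I} (ha : IsLyndon a) (hb : IsLyndon b) (hab : a < b) :
    IsLyndon (a ++ b) := by
  refine ⟨by simp [ha.1], fun i hi hilen => ?_⟩
  rw [length_append] at hilen
  rcases lt_trichotomy i a.length with hlt | rfl | hgt
  · rw [drop_append_of_le_length hlt.le]
    exact append_lt_append_of_length_le (ha.2 i hi hlt) (by simp) b b
  · simpa using ha.append_lt_right hb hab
  · rw [drop_append, drop_eq_nil_of_le hgt.le, nil_append]
    exact (ha.append_lt_right hb hab).trans (hb.2 _ (by omega) (by omega))

theorem IsLyndon.append_lt_append_swap {a b : List I} (ha : IsLyndon a) (hb : IsLyndon b)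
    (hab : a < b) : a ++ b < b ++ a := by
  simpa using append_lt_append_of_length_le (ha.append_lt_right hb hab) (by simp) [] a

theorem LongestLyndonSuffix.isLyndon {w v : List I} (hv : LongestLyndonSuffix w v) :
    IsLyndon v :=
  hv.2.2.1

theorem LongestLyndonSuffix.lt {w v : List I} (hv : LongestLyndonSuffix w v) (hw : IsLyndon w) :
    w < v :=
  hw.lt_of_suffix hv.1 hv.isLyndon.1 hv.2.1

theorem LongestLyndonSuffix.le_of_suffix {w v s : List I} (hv : LongestLyndonSuffix w v)
    (hs : s <:+ w) (hne : s ≠ []) (hlen : s.length < w.length) : v ≤ s := by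
  classical
  obtain ⟨hvw, -, hvL, hmax⟩ := hv
  obtain ⟨m, hm, hmin⟩ := (w.tails.toFinset.filter fun t => t ≠ [] ∧ t.length < w.length)
    |>.exists_min_image id ⟨s, by simp [mem_tails, hs, hne, hlen]⟩
  simp only [Finset.mem_filter, mem_toFinset, mem_tails, id, and_imp] at hm hmin
  obtain ⟨hmw, hmne, hmlen⟩ := hm
  -- The least proper suffix `m` is Lyndon, hence no longer than `v`, hence a suffix of `v`.
  have hmL : IsLyndon m := by
    refine ⟨hmne, fun j hj hjlen => lt_of_le_of_ne ?_ fun h => ?_⟩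
    · exact hmin _ ((drop_suffix j m).trans hmw) (by simp; omega) (by simp; omega)
    · have := congrArg length h
      simp at this
      omega
  have hmv : m <:+ v := suffix_of_suffix_length_le hmw hvw (hmax m hmw hmlen hmL)
  exact (hvL.le_of_suffix hmv hmne).trans (hmin s hs hne hlen)

theorem LongestLyndonSuffix.isLyndon_left {u v : List I} (hv : LongestLyndonSuffix (u ++ v) v)
    (huv : IsLyndon (u ++ v)) : IsLyndon u := by
  have hvlen := hv.2.1
  simp only [length_append] at hvlen
  refine ⟨fun hu => by simp [hu] at hvlen, fun i hi hilen => ?_⟩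
  set s := u.drop i with hs
  have hslen : s.length = u.length - i := length_drop
  have hsne : s ≠ [] := fun h => by simp [hs] at h; omega
  have hsv : u ++ v < s ++ v :=
    huv.lt_of_suffix (suffix_append_self_iff.mpr (drop_suffix i u)) (by simp [hsne])
      (by simp; omega)
  -- If `s < u`, either `s` is not a prefix of `u` and `s ++ v < u ++ v`, or `u = s ++ u'` and
  -- minimality of `v` among proper suffixes gives `v ≤ u' ++ v`, so `s ++ v ≤ u ++ v`.
  by_contra hus
  have hsu : s < u := lt_of_le_of_ne (not_lt.mp hus) fun h => by
    have := congrArg length h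
    omega
  by_cases hp : s <+: u
  · obtain ⟨u', hu'⟩ := hp
    have hu'len : s.length + u'.length = u.length := by rw [← hu', length_append]
    have hvu' : v ≤ u' ++ v :=
      hv.le_of_suffix (hu' ▸ by simp) (by simp [hv.isLyndon.1]) (by simp; omega)
    have hsu'v : s ++ (u' ++ v) < s ++ v := by simpa [← hu'] using hsv
    rcases hvu'.lt_or_eq with hlt | heq
    · exact (append_left_lt hlt).asymm hsu'v
    · rw [← heq] at hsu'v
      exact lt_irrefl _ hsu'v
  · exact (append_lt_append_of_not_prefix hsu hp v v).not_gt hsv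

theorem LongestLyndonSuffix.lt_of_append_of_ne {l₁ l₂ v r : List I}
    (hv : LongestLyndonSuffix l₁ v) (hr : LongestLyndonSuffix (l₁ ++ l₂) r) (h₂ : IsLyndon l₂)
    (hne : l₂ ≠ r) : v < l₂ := by
  obtain ⟨hrw, hrlen, hrL, hmax⟩ := hr
  have h₁len := hv.2.1
  have hl₂r : l₂.length < r.length := by
    refine (hmax l₂ (suffix_append l₁ l₂) (by simp; omega) h₂).lt_of_ne fun h => hne ?_
    exact suffix_of_suffix_length_le (suffix_append l₁ l₂) hrw h.le |>.eq_of_length h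
  obtain ⟨s, rfl⟩ := suffix_of_suffix_length_le (suffix_append l₁ l₂) hrw hl₂r.le
  simp only [length_append] at hl₂r hrlen
  have hsne : s ≠ [] := fun h => by simp [h] at hl₂r
  by_contra! hle
  refine lt_irrefl s ?_
  calc s < s ++ l₂ := lt_append_of_ne_nil s h₂.1
    _ ≤ l₂ := hrL.le_of_suffix (suffix_append s l₂) h₂.1
    _ ≤ v := hle
    _ ≤ s := hv.le_of_suffix (suffix_append_self_iff.mp hrw) hsne (by omega)

theorem rotate_gt_general (ℓ ℓ1 ℓ2 r : List I)
    (h1 : IsLyndon ℓ1) (h2 : IsLyndon ℓ2) (hsplit : ℓ = ℓ1 ++ ℓ2)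
    (hr : LongestLyndonSuffix ℓ r) (hne : ℓ2 ≠ r) :
    ∀ u v : List I, ℓ1 = u ++ v → LongestLyndonSuffix ℓ1 v →
      IsLyndon (u ++ ℓ2) ∧ ℓ < u ++ ℓ2 ++ v ∧ ℓ < v ++ u ++ ℓ2 := by
  intro u v huv hv
  subst hsplit
  have hℓ1v : ℓ1 < v := hv.lt h1
  have hvℓ2 : v < ℓ2 := hv.lt_of_append_of_ne hr h2 hne
  subst huv
  have hu : IsLyndon u := hv.isLyndon_left h1
  have huℓ1 : u < u ++ v := lt_append_of_ne_nil u hv.isLyndon.1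
  refine ⟨hu.append h2 (huℓ1.trans (hℓ1v.trans hvℓ2)), ?_, ?_⟩
  · simpa using append_left_lt (l₁ := u) (hv.isLyndon.append_lt_append_swap h2 hvℓ2)
  · simpa using append_lt_append_of_length_le hℓ1v hv.2.1.le ℓ2 (u ++ ℓ2)

/-- If `ℓ = ℓ1 ℓ2` with `ℓ, ℓ1, ℓ2` Lyndon and `ℓ2 ≠ ℓ^r`, then, writing the costandard
factorization `ℓ1 = u v`, the word `u ℓ2` is Lyndon and both rearrangements `u ℓ2 v`
and `v u ℓ2` are lexicographically greater than `ℓ`. -/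
theorem rotate_gt (ℓ ℓ1 ℓ2 r : List I)
    (hℓ : IsLyndon ℓ) (h1 : IsLyndon ℓ1) (h2 : IsLyndon ℓ2) (hsplit : ℓ = ℓ1 ++ ℓ2)
    (hr : LongestLyndonSuffix ℓ r) (hne : ℓ2 ≠ r) :
    ∀ u v : List I, ℓ1 = u ++ v → LongestLyndonSuffix ℓ1 v →
      IsLyndon (u ++ ℓ2) ∧ ℓ < u ++ ℓ2 ++ v ∧ ℓ < v ++ u ++ ℓ2 :=
  rotate_gt_general ℓ ℓ1 ℓ2 r h1 h2 hsplit hr hne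
end

section
/- Let ℓ = ℓ1 ℓ2 be a factorization of a Lyndon word ℓ with ℓ1 and ℓ2 both Lyndon and |ℓ1| > 1. Then ℓ2 equals the longest proper Lyndon suffix ℓ^r of ℓ if and only if ℓ1^r ≥ ℓ2, where ℓ1^r is the longest proper Lyndon suffix of ℓ1. -/
/- Words over a linearly ordered alphabet `I` are lists, compared by the
lexicographic order of Lean's `LinearOrder (List I)` instance, in which a word
is smaller than any word of which it is a proper prefix. -/

variable {I : Type*} [LinearOrder I]

/-! If `ℓ1^r < ℓ2`, then `ℓ1^r ℓ2` is a Lyndon proper suffix of `ℓ` longer than `ℓ2`.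
Conversely, `ℓ1^r` is the smallest nonempty proper suffix of `ℓ1`, because every nonempty word
has a Lyndon suffix below it. A Lyndon suffix `n ℓ2` of `ℓ` with `n` nonempty satisfies
`n ℓ2 < ℓ2`, which is impossible once `ℓ2 ≤ ℓ1^r ≤ n`. -/

namespace List

theorem append_lt_append_of_lt_of_not_isPrefix {u w : List I} (h : u < w) (hp : ¬u <+: w)
    (x y : List I) : u ++ x < w ++ y := by
  change Lex (· < ·) u w at h
  induction h with
  | nil => exact absurd nil_prefix hp
  | rel hab => exact Lex.rel hab
  | cons _ ih => exact Lex.cons (ih fun hpre => hp (cons_prefix_cons.mpr ⟨rfl, hpre⟩))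

theorem le_append_of_le {u w : List I} (h : u ≤ w) (x : List I) : u ≤ w ++ x := by
  rcases h.lt_or_eq with h | rfl
  · exact le_of_lt (Lex.append_right _ x h)
  · exact not_lt.mp (le_append_left (l₁ := u) (l₂ := x))

end List

open List

theorem IsLyndon.lt_of_append {u v : List I} (h : IsLyndon (u ++ v)) (hu : u ≠ [])
    (hv : v ≠ []) : u ++ v < v := by
  simpa using h.2 u.length (length_pos_iff.mpr hu) (by simp [length_pos_iff.mpr hv])

theorem IsLyndon.le_of_isSuffix {w t : List I} (hw : IsLyndon w) (ht : t <:+ w)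
    (hne : t ≠ []) : w ≤ t := by
  obtain ⟨p, rfl⟩ := ht
  rcases eq_or_ne p [] with rfl | hp
  · simp
  · exact (hw.lt_of_append hp hne).le

theorem IsLyndon.append_lt_of_lt {u v : List I} (hv : IsLyndon v) (hu : u ≠ []) (huv : u < v) :
    u ++ v < v := by
  by_cases hp : u <+: v
  · obtain ⟨w, rfl⟩ := hp
    have hw : w ≠ [] := by
      rintro rfl
      simp at huv
    exact append_left_lt (hv.lt_of_append hu hw)
  · simpa using append_lt_append_of_lt_of_not_isPrefix huv hp v []

theorem IsLyndon.append_s10 {u v : List I} (hu : IsLyndon u) (hv : IsLyndon v) (huv : u < v) :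
    IsLyndon (u ++ v) := by
  have huv_lt_v : u ++ v < v := hv.append_lt_of_lt hu.1 huv
  refine ⟨by simp [hu.1], fun i hi0 hi => ?_⟩
  rcases lt_trichotomy i u.length with hiu | rfl | hiu
  · rw [drop_append_of_le_length hiu.le]
    have hshort : (u.drop i).length < u.length := by rw [length_drop]; omega
    exact append_lt_append_of_lt_of_not_isPrefix (hu.2 i hi0 hiu)
      (fun hpre => absurd hpre.length_le (by omega)) v v
  · simpa using huv_lt_v
  · rw [drop_append, drop_eq_nil_of_le hiu.le, nil_append]
    exact huv_lt_v.trans (hv.2 _ (by omega) (by rw [length_append] at hi; omega))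

theorem exists_isLyndon_isSuffix_le (t : List I) (ht : t ≠ []) :
    ∃ s, s <:+ t ∧ IsLyndon s ∧ s ≤ t := by
  induction h : t.length using Nat.strong_induction_on generalizing t with
  | _ n ih =>
    by_cases hL : IsLyndon t
    · exact ⟨t, suffix_refl t, hL, le_rfl⟩
    · obtain ⟨i, hi0, hit, hle⟩ : ∃ i, 0 < i ∧ i < t.length ∧ t.drop i ≤ t := by
        simpa [IsLyndon, ht] using hL
      obtain ⟨s, hs, hsL, hst⟩ :=
        ih _ (by rw [length_drop]; omega) (t.drop i) (by rw [Ne, drop_eq_nil_iff]; omega) rfl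
      exact ⟨s, hs.trans (drop_suffix i t), hsL, hst.trans hle⟩

theorem LongestLyndonSuffix.le_of_isSuffix {l r t : List I} (hr : LongestLyndonSuffix l r)
    (ht : t <:+ l) (hne : t ≠ []) (hlt : t.length < l.length) : r ≤ t := by
  obtain ⟨s, hst, hsL, hs_le⟩ := exists_isLyndon_isSuffix_le t hne
  have hsl : s <:+ l := hst.trans ht
  have hsr : s <:+ r :=
    suffix_of_suffix_length_le hsl hr.1 (hr.2.2.2 s hsl (hst.length_le.trans_lt hlt) hsL)
  exact (hr.2.2.1.le_of_isSuffix hsr hsL.1).trans hs_le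

theorem right_factor_iff_general (ℓ ℓ1 ℓ2 r r1 : List I)
    (h2 : IsLyndon ℓ2) (hsplit : ℓ = ℓ1 ++ ℓ2)
    (hr : LongestLyndonSuffix ℓ r) (hr1 : LongestLyndonSuffix ℓ1 r1) :
    ℓ2 = r ↔ ℓ2 ≤ r1 := by
  subst hsplit
  constructor
  · rintro rfl
    by_contra! hlt
    obtain ⟨⟨p1, rfl⟩, hr1len, hr1L, -⟩ := hr1
    have hlong := hr.2.2.2 (r1 ++ ℓ2) ⟨p1, by simp⟩ (by simpa using hr1len) (hr1L.append_s10 h2 hlt)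
    exact hr1L.1 (by simpa using hlong)
  · intro hle
    obtain ⟨⟨m, hm⟩, hrlen, hrL, hrmax⟩ := hr
    obtain ⟨n, rfl⟩ : ℓ2 <:+ r := suffix_of_suffix_length_le ⟨ℓ1, rfl⟩ ⟨m, hm⟩
      (hrmax ℓ2 ⟨ℓ1, rfl⟩ (by simpa using (Nat.zero_le _).trans_lt hr1.2.1) h2)
    rcases eq_or_ne n [] with rfl | hn
    · simp
    have hmn : m ++ n = ℓ1 := append_cancel_right (by simpa using hm)
    have hr1n : r1 ≤ n := hr1.le_of_isSuffix ⟨m, hmn⟩ hn (by simpa using hrlen)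
    exact absurd (hrL.lt_of_append hn h2.1) (not_lt.mpr (le_append_of_le (hle.trans hr1n) ℓ2))

/-- If `ℓ = ℓ1 ℓ2` with `ℓ, ℓ1, ℓ2` Lyndon and `|ℓ1| > 1`, then `ℓ2` equals the longest
proper Lyndon suffix `ℓ^r` of `ℓ` if and only if `ℓ1^r ≥ ℓ2`. -/
theorem right_factor_iff (ℓ ℓ1 ℓ2 r r1 : List I)
    (hℓ : IsLyndon ℓ) (h1 : IsLyndon ℓ1) (h2 : IsLyndon ℓ2) (hsplit : ℓ = ℓ1 ++ ℓ2)
    (h1len : 1 < ℓ1.length)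
    (hr : LongestLyndonSuffix ℓ r) (hr1 : LongestLyndonSuffix ℓ1 r1) :
    ℓ2 = r ↔ ℓ2 ≤ r1 :=
  right_factor_iff_general ℓ ℓ1 ℓ2 r r1 h2 hsplit hr hr1
end

section
/- Let u be a Lyndon word and write u = v w with w Lyndon and v nonempty, and let v = v1 v2 ... vN be the canonical factorization of v (each vi Lyndon, v1 ≥ v2 ≥ ... ≥ vN). Then every partial concatenation vN w, v_{N-1} vN w, ..., v1 v2 ... vN w is a Lyndon word. -/
/- Words over a linearly ordered alphabet `I` are lists, compared by the
lexicographic order of Lean's `LinearOrder (List I)` instance, in which a word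
is smaller than any word of which it is a proper prefix. -/

variable {I : Type*} [LinearOrder I]

/-!
Peel the factors off from the right. Every factor `vᵢ` is at most `v₁`, hence at most its
extension `u`; and each partial concatenation `vᵢ₊₁ ⋯ v_N w` is a proper nonempty suffix of
the Lyndon word `u`, hence greater than `u`. So `vᵢ < vᵢ₊₁ ⋯ v_N w`, and the concatenation
`a b` of Lyndon words `a < b` is Lyndon.
-/

namespace List

theorem Lex.append_of_not_prefix {α : Type*} {r : α → α → Prop} {x y : List α}
    (h : Lex r x y) (hxy : ¬ x <+: y) (s t : List α) : Lex r (x ++ s) (y ++ t) := by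
  induction h with
  | nil => exact absurd nil_prefix hxy
  | rel h => exact Lex.rel h
  | cons _ ih => exact Lex.cons (ih fun hp => hxy (cons_prefix_cons.mpr ⟨rfl, hp⟩))

/-- Core's `List.IsPrefix.le` is about core's `≤` on lists, not Mathlib's linear order. -/
theorem IsPrefix.le' {x y : List I} (h : x <+: y) : x ≤ y :=
  le_of_not_gt h.le

end List

namespace IsLyndon

theorem le_drop {w : List I} (hw : IsLyndon w) {i : ℕ} (hi : i < w.length) :
    w ≤ w.drop i := by
  rcases Nat.eq_zero_or_pos i with rfl | hpos
  · rw [List.drop_zero]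
  · exact (hw.2 i hpos hi).le

theorem lt_of_isSuffix {u s : List I} (hu : IsLyndon u) (hs : s <:+ u) (hne : s ≠ [])
    (hlen : s.length < u.length) : u < s := by
  rw [List.suffix_iff_eq_drop.mp hs]
  exact hu.2 _ (by omega) (by have := List.length_pos_iff.mpr hne; omega)

theorem append_lt {a b : List I} (hb : IsLyndon b) (ha : a ≠ []) (hab : a < b) :
    a ++ b < b := by
  by_cases hpre : a <+: b
  · obtain ⟨c, rfl⟩ := hpre
    have hc : c ≠ [] := by
      rintro rfl
      rw [List.append_nil] at hab
      exact lt_irrefl a hab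
    exact List.append_left_lt (hb.lt_of_isSuffix (List.suffix_append a c) hc
      (by simp [List.length_pos_iff.mpr ha]))
  · simpa using List.Lex.append_of_not_prefix hab hpre b []

theorem append_s15 {a b : List I} (ha : IsLyndon a) (hb : IsLyndon b) (hab : a < b) :
    IsLyndon (a ++ b) := by
  refine ⟨by simp [ha.1], fun i hi hlen => ?_⟩
  rcases lt_or_ge i a.length with hia | hai
  · rw [List.drop_append_of_le_length hia.le]
    have hshort : ¬ a <+: a.drop i := fun hp => by
      have := hp.length_le
      simp only [List.length_drop] at this
      omega
    simpa using List.Lex.append_of_not_prefix (ha.2 i hi hia) hshort b b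
  · rw [List.drop_append, List.drop_eq_nil_of_le hai, List.nil_append]
    exact lt_of_lt_of_le (hb.append_lt ha.1 hab)
      (hb.le_drop (by simp only [List.length_append] at hlen; omega))

end IsLyndon

theorem isLyndon_flatten_append_of_isSuffix {u w : List I} (hu : IsLyndon u) (hw : IsLyndon w) :
    ∀ {gs : List (List I)}, (∀ g ∈ gs, IsLyndon g ∧ g ≤ u) → gs.flatten ++ w <:+ u →
      IsLyndon (gs.flatten ++ w)
  | [], _, _ => by simpa using hw
  | g :: gs, hgs, hsuf => by
    rw [List.flatten_cons, List.append_assoc] at hsuf ⊢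
    have htail := (List.suffix_append g _).trans hsuf
    have hg := hgs g List.mem_cons_self
    have hu_lt : u < gs.flatten ++ w := hu.lt_of_isSuffix htail (by simp [hw.1]) (by
      have := hsuf.length_le
      simp only [List.length_append] at this ⊢
      have := List.length_pos_iff.mpr hg.1.1
      omega)
    have htail_lyndon := isLyndon_flatten_append_of_isSuffix hu hw
      (fun g' hg' => hgs g' (List.mem_cons_of_mem g hg')) htail
    exact hg.1.append_s15 htail_lyndon (lt_of_le_of_lt hg.2 hu_lt)

theorem le_flatten_of_isChain_ge {fs : List (List I)} (hfs : fs.IsChain (· ≥ ·)) {g : List I}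
    (hg : g ∈ fs) : g ≤ fs.flatten := by
  obtain _ | ⟨f, rest⟩ := fs
  · simp at hg
  have hgf : g ≤ f := by
    rcases List.mem_cons.mp hg with rfl | hrest
    · exact le_rfl
    · exact (List.pairwise_cons.mp (List.isChain_iff_pairwise.mp hfs)).1 g hrest
  exact hgf.trans (List.prefix_append f rest.flatten).le'

theorem partial_left_concat_lyndon_general (u v w : List I)
    (hu : IsLyndon u) (hw : IsLyndon w) (hsplit : u = v ++ w)
    (fs : List (List I)) (hfac : IsCanonicalFactorization v fs) :
    ∀ k, 1 ≤ k → k ≤ fs.length →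
      IsLyndon ((fs.drop (fs.length - k)).flatten ++ w) := by
  obtain ⟨rfl, -, hlyn, hchain⟩ := hfac
  subst hsplit
  intro k _ _
  have hsuffix : (fs.drop (fs.length - k)).flatten ++ w <:+ fs.flatten ++ w :=
    ⟨(fs.take (fs.length - k)).flatten, by
      rw [← List.append_assoc, ← List.flatten_append, List.take_append_drop]⟩
  refine isLyndon_flatten_append_of_isSuffix hu hw (fun g hg => ?_) hsuffix
  have hg' := List.mem_of_mem_drop hg
  exact ⟨hlyn g hg', (le_flatten_of_isChain_ge hchain hg').trans (List.prefix_append _ w).le'⟩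

/-- If a Lyndon word `u` splits as `u = v w` with `w` Lyndon and `v` nonempty, and
`v = v1 … vN` is the canonical factorization of `v`, then every partial concatenation
`v_{N-k+1} … vN w` (for `1 ≤ k ≤ N`) is Lyndon. -/
theorem partial_left_concat_lyndon (u v w : List I)
    (hu : IsLyndon u) (hw : IsLyndon w) (hv : v ≠ []) (hsplit : u = v ++ w)
    (fs : List (List I)) (hfac : IsCanonicalFactorization v fs) :
    ∀ k, 1 ≤ k → k ≤ fs.length →
      IsLyndon ((fs.drop (fs.length - k)).flatten ++ w) :=
  partial_left_concat_lyndon_general u v w hu hw hsplit fs hfac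
end
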